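/- arXiv:1812.08203 — 3 statements merged into one kernel-verified Lean document; each statement's English description precedes it below -/
import Mathlib

section
/- Let X and Y be locally spectral topological spaces and let f : X → Y be a surjective, generalizing continuous map (i.e., for every x ∈ X and every generalization y' of f(x) in Y there exists a generalization x' of x with f(x') = y'). Then the Krull dimension of X is at least the Krull dimension of Y. -/
/-- The Krull dimension of a topological space: the supremum of the lengths `k` of chains
`x₀ ≺ x₁ ≺ ⋯ ≺ x_k` of distinct points, each a proper generalization of the previous one,
i.e. the Krull dimension of the specialization preorder. -/
noncomputable def specKrullDim (X : Type*) [TopologicalSpace X] : WithBot ℕ∞ :=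
  @Order.krullDim X (specializationPreorder X)

/-- A topological space is spectral if it is quasicompact, `T0`, quasi-sober, and its
quasicompact open subsets form a basis which is stable under finite intersections. -/
structure IsSpectralSpace (X : Type*) [TopologicalSpace X] : Prop where
  compact : CompactSpace X
  t0 : T0Space X
  sober : QuasiSober X
  basis : TopologicalSpace.IsTopologicalBasis {U : Set X | IsOpen U ∧ IsCompact U}
  inter : ∀ U V : Set X, IsOpen U → IsCompact U → IsOpen V → IsCompact V → IsCompact (U ∩ V)

/-- A topological space is locally spectral if it admits an open cover by spectral spaces. -/
def IsLocallySpectral (X : Type*) [TopologicalSpace X] : Prop :=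
  ∀ x : X, ∃ U : Set X, IsOpen U ∧ x ∈ U ∧ IsSpectralSpace U

/-!
In the specialization preorder a generalizing continuous map is monotone and has the going-up
property, hence lifts strict chains: if `x` lies over `yₖ` and `yₖ₊₁` properly generalizes `yₖ`,
a generalization `x'` of `x` over `yₖ₊₁` is a proper one, since `x' ⤳ x` would force
`yₖ₊₁ ⤳ yₖ`. Surjectivity starts the induction, so every chain of `Y` lifts to a chain of `X` of
the same length.
-/

open Order Relation

namespace Relation.Fibration

variable {α β : Type*} [Preorder α] [Preorder β] {f : α → β}

lemma gt_of_ge (hmono : Monotone f) (hf : Fibration (· ≥ ·) (· ≥ ·) f) :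
    Fibration (· > ·) (· > ·) f := by
  intro a b hlt
  obtain ⟨a', hle, rfl⟩ := hf hlt.le
  exact ⟨a', hle.lt_of_not_ge fun hge => hlt.not_ge (hmono hge), rfl⟩

end Relation.Fibration

namespace LTSeries

variable {α β : Type*} [Preorder α] [Preorder β] {f : α → β}

lemma exists_lift_of_fibration (hsurj : Function.Surjective f)
    (hf : Fibration (· > ·) (· > ·) f) (p : LTSeries β) :
    ∃ q : LTSeries α, q.length = p.length ∧ f q.last = p.last := by
  induction p using RelSeries.inductionOn' with
  | singleton y =>
    obtain ⟨x, rfl⟩ := hsurj y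
    exact ⟨RelSeries.singleton _ x, rfl, rfl⟩
  | snoc p y hy ih =>
    obtain ⟨q, hlen, hlast⟩ := ih
    obtain ⟨x, hx, rfl⟩ := hf (hlast ▸ hy : f q.last < y)
    exact ⟨q.snoc x hx, by simp [hlen], by simp⟩

end LTSeries

lemma Order.krullDim_le_of_fibration_of_surjective {α β : Type*} [Preorder α] [Preorder β]
    {f : α → β} (hsurj : Function.Surjective f) (hf : Fibration (· > ·) (· > ·) f) :
    krullDim β ≤ krullDim α :=
  iSup_le fun p => by
    obtain ⟨q, hlen, -⟩ := p.exists_lift_of_fibration hsurj hf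
    exact hlen ▸ LTSeries.length_le_krullDim q

theorem specKrullDim_le_of_surjective_generalizing_general
    {X Y : Type*} [TopologicalSpace X] [TopologicalSpace Y]
    (f : X → Y) (hcont : Continuous f) (hsurj : Function.Surjective f)
    (hgen : GeneralizingMap f) :
    specKrullDim Y ≤ specKrullDim X := by
  let _ := specializationPreorder X
  let _ := specializationPreorder Y
  exact krullDim_le_of_fibration_of_surjective hsurj (hgen.gt_of_ge hcont.specialization_monotone)

/-- If `f : X → Y` is a surjective, generalizing continuous map of locally spectral spaces,
then the Krull dimension of `X` is at least the Krull dimension of `Y`. -/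
theorem specKrullDim_le_of_surjective_generalizing
    {X Y : Type*} [TopologicalSpace X] [TopologicalSpace Y]
    (hX : IsLocallySpectral X) (hY : IsLocallySpectral Y)
    (f : X → Y) (hcont : Continuous f) (hsurj : Function.Surjective f)
    (hgen : GeneralizingMap f) :
    specKrullDim Y ≤ specKrullDim X :=
  specKrullDim_le_of_surjective_generalizing_general f hcont hsurj hgen
end

section
/- Let A be a commutative ring, a ∈ A a regular element (non-zerodivisor), and g ∈ A[X] a polynomial of the form g = b·X - c where b ∈ A is a non-zerodivisor modulo a (i.e., multiplication by b is injective on A/aA). Then the a-torsion of A[X]/(g) equals the image in A[X]/(g) of elements mapping to g-torsion in A[X]/aA[X]; in particular, if b is a non-zerodivisor in A/aA then A[X]/(bX - c) has no a-torsion. -/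
/-!
Write `g = b X - c`. An `a`-torsion class `[u]` of `A[X]/(g)` comes from an identity
`g z = a u`. Since `b` is a non-zerodivisor modulo `a`, so is `g` in `A[X]`: reading
`g z ≡ 0 mod a` coefficientwise gives `b z_n ≡ c z_(n+1)`, and a descending induction from the
top coefficient shows `a ∣ z`. Writing `z = a w` and cancelling the regular element `a` gives
`u = g w`, so `[u] = 0`.
-/

open Polynomial

theorem Ideal.Quotient.mk_mul_eq_zero_iff_exists_mul_eq {S : Type*} [CommRing S] (g r : S)
    (y : S ⧸ Ideal.span {g}) :
    Ideal.Quotient.mk _ r * y = 0 ↔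
      ∃ z u : S, g * z = r * u ∧ Ideal.Quotient.mk (Ideal.span {g}) u = y := by
  obtain ⟨v, rfl⟩ := Ideal.Quotient.mk_surjective y
  rw [← map_mul, Ideal.Quotient.eq_zero_iff_mem, Ideal.mem_span_singleton]
  constructor
  · rintro ⟨z, hz⟩
    exact ⟨z, v, hz.symm, rfl⟩
  · rintro ⟨z, u, hzu, huv⟩
    obtain ⟨w, hw⟩ := Ideal.mem_span_singleton.mp (Ideal.Quotient.eq.mp huv)
    exact ⟨z - r * w, by linear_combination -hzu - r * hw⟩

namespace Polynomial

variable {A : Type*} [CommRing A]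

theorem isLeftRegular_C {a : A} (ha : IsLeftRegular a) : IsLeftRegular (C a) := by
  intro u v huv
  simp only [← smul_eq_C_mul] at huv
  exact (isLeftRegular_iff.mp ha).polynomial huv

theorem coeff_succ_C_mul_X_sub_C_mul (b c : A) (z : A[X]) (n : ℕ) :
    ((C b * X - C c) * z).coeff (n + 1) = b * z.coeff n - c * z.coeff (n + 1) := by
  simp only [sub_mul, coeff_sub, mul_assoc, coeff_C_mul, coeff_X_mul]

theorem mem_map_C_of_C_mul_X_sub_C_mul_mem {I : Ideal A} {b : A}
    (hb : ∀ x, b * x ∈ I → x ∈ I) (c : A) {z : A[X]} (hz : (C b * X - C c) * z ∈ I.map C) :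
    z ∈ I.map C := by
  rw [Ideal.mem_map_C_iff] at hz ⊢
  have descend : ∀ m n, z.natDegree < n + m → z.coeff n ∈ I := by
    intro m
    induction m with
    | zero =>
      intro n hn
      rw [coeff_eq_zero_of_natDegree_lt (by omega)]
      exact I.zero_mem
    | succ m ih =>
      intro n hn
      apply hb
      have := I.add_mem (hz (n + 1)) (I.mul_mem_left c (ih (n + 1) (by omega)))
      rwa [coeff_succ_C_mul_X_sub_C_mul, sub_add_cancel] at this
  exact fun n => descend (z.natDegree + 1) n (by omega)

theorem C_dvd_of_C_dvd_C_mul_X_sub_C_mul {a b : A} (hb : ∀ x, a ∣ b * x → a ∣ x) (c : A)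
    {z : A[X]} (hz : C a ∣ (C b * X - C c) * z) : C a ∣ z := by
  have hspan : (Ideal.span {a}).map (C : A →+* A[X]) = Ideal.span {C a} := by
    rw [Ideal.map_span, Set.image_singleton]
  rw [← Ideal.mem_span_singleton, ← hspan] at hz ⊢
  exact mem_map_C_of_C_mul_X_sub_C_mul_mem
    (fun x hx => Ideal.mem_span_singleton.mpr (hb x (Ideal.mem_span_singleton.mp hx))) c hz

end Polynomial

/-- Let `A` be a commutative ring, `a ∈ A` a regular element, and `g = b·X - c` with `b` a
non-zerodivisor modulo `a`.  Then the `a`-torsion of `A[X]/(g)` is exactly the image of the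
`g`-torsion of `A[X]/aA[X]`: an element `y` is `a`-torsion if and only if `y` is the class of
`u` where `a·u = g·z` for some `z` (so that `z mod a` is `g`-torsion and `u = (g·z)/a`).
In particular, since `b` is a non-zerodivisor in `A/aA`, the ring `A[X]/(b·X - c)` has no
`a`-torsion. -/
theorem torsion_of_polynomial_quotient (A : Type*) [CommRing A] (a b c : A)
    (ha : ∀ x : A, a * x = 0 → x = 0)
    (hb : ∀ x : A, a ∣ b * x → a ∣ x) :
    (∀ y : Polynomial A ⧸ Ideal.span {C b * X - C c},
        a • y = 0 ↔ ∃ z u : Polynomial A, (C b * X - C c) * z = C a * u ∧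
          Ideal.Quotient.mk (Ideal.span {C b * X - C c}) u = y) ∧
    (∀ y : Polynomial A ⧸ Ideal.span {C b * X - C c}, a • y = 0 → y = 0) := by
  set g : A[X] := C b * X - C c
  have torsion (y : A[X] ⧸ Ideal.span {g}) :
      a • y = 0 ↔ ∃ z u : A[X], g * z = C a * u ∧ Ideal.Quotient.mk (Ideal.span {g}) u = y := by
    rw [show a • y = Ideal.Quotient.mk _ (C a) * y from Algebra.smul_def a y]
    exact Ideal.Quotient.mk_mul_eq_zero_iff_exists_mul_eq g (C a) y
  refine ⟨torsion, fun y hy => ?_⟩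
  obtain ⟨z, u, hzu, rfl⟩ := (torsion y).mp hy
  obtain ⟨w, rfl⟩ := C_dvd_of_C_dvd_C_mul_X_sub_C_mul hb c ⟨u, hzu⟩
  have hu : u = g * w :=
    isLeftRegular_C (isLeftRegular_iff_right_eq_zero_of_mul.mpr ha) (by linear_combination -hzu)
  rw [hu, Ideal.Quotient.eq_zero_iff_mem]
  exact Ideal.mul_mem_right w _ (Ideal.mem_span_singleton_self g)
end

section
/- Let A be a reduced commutative ring, and let B be an A-module with two direct sum decompositions B = I ⊕ C = J ⊕ D, where I, J, C, D are finite free A-modules. Suppose that for every ring homomorphism from A to an algebraically closed field κ (equivalently, every geometric point of Spec A), the image of J ⊗_A κ in B ⊗_A κ is contained in the image of I ⊗_A κ. Then J ⊆ I as submodules of B. -/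
/-!
Project onto the free complement `C` of `I` along `I` and take coordinates in a basis of `C`:
for `x ∈ J`, each coordinate of the projection of `x` vanishes at every geometric point, hence
lies in every prime ideal, hence is nilpotent, hence is zero because `A` is reduced.
-/

universe u v

open TensorProduct

theorem IsReduced.eq_zero_of_forall_algebraMap_eq_zero {A : Type u} [CommRing A] [IsReduced A]
    {a : A} (h : ∀ (κ : Type u) [Field κ] [IsAlgClosed κ] [Algebra A κ], algebraMap A κ a = 0) :
    a = 0 := by
  refine (nilpotent_iff_mem_prime.mpr fun p (hp : p.IsPrime) ↦ ?_).eq_zero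
  have hκ := h (AlgebraicClosure p.ResidueField)
  rwa [IsScalarTower.algebraMap_apply A p.ResidueField, map_eq_zero,
    Ideal.algebraMap_residueField_eq_zero] at hκ

theorem Module.Free.eq_zero_of_forall_one_tmul_eq_zero {A : Type u} [CommRing A] [IsReduced A]
    {M : Type v} [AddCommGroup M] [Module A M] [Module.Free A M] {m : M}
    (h : ∀ (κ : Type u) [Field κ] [IsAlgClosed κ] [Algebra A κ], (1 : κ) ⊗ₜ[A] m = 0) :
    m = 0 := by
  let b := Module.Free.chooseBasis A M
  refine b.repr.map_eq_zero_iff.mp (Finsupp.ext fun i ↦ ?_)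
  refine IsReduced.eq_zero_of_forall_algebraMap_eq_zero fun κ _ _ _ ↦ ?_
  simpa [Algebra.algebraMap_eq_smul_one] using
    congr_arg (fun t ↦ (b.baseChange κ).repr t i) (h κ)

theorem Submodule.baseChange_le_ker_baseChange {R S M N : Type*} [CommSemiring R] [Semiring S]
    [Algebra R S] [AddCommMonoid M] [Module R M] [AddCommMonoid N] [Module R N]
    {p : Submodule R M} {f : M →ₗ[R] N} (hp : p ≤ LinearMap.ker f) :
    p.baseChange S ≤ LinearMap.ker (f.baseChange S) := by
  rintro _ ⟨y, rfl⟩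
  have hf : f ∘ₗ p.subtype = 0 := LinearMap.ext fun z ↦ hp z.2
  rw [LinearMap.mem_ker, ← LinearMap.comp_apply, ← LinearMap.baseChange_comp, hf,
    LinearMap.baseChange_zero, LinearMap.zero_apply]

theorem Submodule.mem_of_forall_one_tmul_mem_baseChange {A : Type u} [CommRing A] [IsReduced A]
    {B : Type v} [AddCommGroup B] [Module A B] {I C : Submodule A B} (hIC : IsCompl I C)
    [Module.Free A C] {x : B}
    (h : ∀ (κ : Type u) [Field κ] [IsAlgClosed κ] [Algebra A κ],
      (1 : κ) ⊗ₜ[A] x ∈ I.baseChange κ) :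
    x ∈ I := by
  let π := C.projectionOnto I hIC.symm
  rw [← Submodule.projectionOnto_apply_eq_zero_iff hIC.symm]
  refine Module.Free.eq_zero_of_forall_one_tmul_eq_zero (A := A) fun κ _ _ _ ↦ ?_
  have hπ : I.baseChange κ ≤ LinearMap.ker (π.baseChange κ) :=
    Submodule.baseChange_le_ker_baseChange (Submodule.ker_projectionOnto hIC.symm).ge
  simpa using hπ (h κ)

theorem submodule_le_of_forall_geometric_point_general
    {A : Type u} [CommRing A] [IsReduced A]
    {B : Type v} [AddCommGroup B] [Module A B]
    (I C J : Submodule A B) (hIC : IsCompl I C)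
    [Module.Free A C]
    (h : ∀ (κ : Type u) [Field κ] [IsAlgClosed κ] [Algebra A κ],
      J.baseChange κ ≤ I.baseChange κ) :
    J ≤ I := fun _ hx ↦
  Submodule.mem_of_forall_one_tmul_mem_baseChange hIC fun κ _ _ _ ↦
    h κ (Submodule.tmul_mem_baseChange_of_mem 1 hx)

/-- Let `A` be a reduced commutative ring and `B` an `A`-module with two direct sum
decompositions `B = I ⊕ C = J ⊕ D` where `I, C, J, D` are finite free.  If for every
homomorphism from `A` to an algebraically closed field `κ` (i.e. every geometric point of
`Spec A`) the image of `J ⊗_A κ` in `B ⊗_A κ` is contained in the image of `I ⊗_A κ`,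
then `J ⊆ I` as submodules of `B`. -/
theorem submodule_le_of_forall_geometric_point
    {A : Type u} [CommRing A] [IsReduced A]
    {B : Type v} [AddCommGroup B] [Module A B]
    (I C J D : Submodule A B) (hIC : IsCompl I C) (hJD : IsCompl J D)
    [Module.Finite A I] [Module.Free A I] [Module.Finite A C] [Module.Free A C]
    [Module.Finite A J] [Module.Free A J] [Module.Finite A D] [Module.Free A D]
    (h : ∀ (κ : Type u) [Field κ] [IsAlgClosed κ] [Algebra A κ],
      J.baseChange κ ≤ I.baseChange κ) :
    J ≤ I :=
  submodule_le_of_forall_geometric_point_general I C J hIC h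
end
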